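/- With G as defined (bump-modified identity around the points ζ_i with parameters α_i and ν < min{min_i 1/(8|α_i|), min_i (ζ_{i+1}−ζ_i)/2}), one has inf_{x∈ℝ} G'(x) > 0, and there exists c ∈ (0,∞) such that G'(x) = 1 for all |x| > c. -/

import Mathlib

/-!
With `g u = max (1 - u²) 0 ^ 2 * u` one has `bump u * (u * |u|) = g u * |g u|`, and `g` is `C¹`
because `s ↦ max s 0 ^ 2` is; so `G` is differentiable with
`G' x = 1 + ∑ i, α i * ν * bumpDeriv ((x - ζ i) / ν)`, where `bumpDeriv` vanishes for `|u| ≥ 1`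
and is bounded by `2`. Since the `ζ i` are `2ν`-separated, at most one summand is nonzero at any
`x`, and `8 |α i| ν < 1` bounds it by `1/4`. Hence `G' ≥ 3/4`, and `G' = 1` once
`|x| > ν + ∑ i, |ζ i|`.
-/

/-- The bump function used for the transformation `G`. -/
noncomputable def bump (u : ℝ) : ℝ := if |u| ≤ 1 then (1 - u ^ 2) ^ 4 else 0

/-- The transformation `G` built from the bump function. -/
noncomputable def Gtrans {m : ℕ} (ζ α : Fin m → ℝ) (ν : ℝ) (x : ℝ) : ℝ :=
  x + ∑ i, α i * bump ((x - ζ i) / ν) * ((x - ζ i) * |x - ζ i|)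

open Filter Topology

theorem hasDerivAt_mul_abs (t : ℝ) : HasDerivAt (fun s : ℝ => s * |s|) (2 * |t|) t := by
  rcases eq_or_ne t 0 with rfl | ht
  · rw [hasDerivAt_iff_tendsto_slope_zero]
    have hcont : Tendsto (fun s : ℝ => |s|) (𝓝[≠] 0) (𝓝 (2 * |(0 : ℝ)|)) := by
      simpa using (continuous_abs.tendsto (0 : ℝ)).mono_left nhdsWithin_le_nhds
    refine hcont.congr' ?_
    filter_upwards [self_mem_nhdsWithin] with s (hs : s ≠ 0)
    simp [hs]
  · refine ((hasDerivAt_id t).fun_mul (hasDerivAt_abs ht)).congr_deriv ?_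
    simp only [id, one_mul, self_mul_sign]
    ring

theorem hasDerivAt_sq_max_zero (s : ℝ) :
    HasDerivAt (fun s : ℝ => max s 0 ^ 2) (2 * max s 0) s := by
  have hsplit : (fun s : ℝ => max s 0 ^ 2) = fun s => (s ^ 2 + s * |s|) / 2 := by
    ext s
    rcases le_total 0 s with h | h
    · rw [max_eq_left h, abs_of_nonneg h]; ring
    · rw [max_eq_right h, abs_of_nonpos h]; ring
  rw [hsplit]
  refine (((hasDerivAt_pow 2 s).fun_add (hasDerivAt_mul_abs s)).div_const 2).congr_deriv ?_
  rcases le_total 0 s with h | h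
  · rw [max_eq_left h, abs_of_nonneg h]; ring
  · rw [max_eq_right h, abs_of_nonpos h]; ring

theorem bump_eq_max_pow (u : ℝ) : bump u = max (1 - u ^ 2) 0 ^ 4 := by
  have hsq : u ^ 2 = |u| ^ 2 := (sq_abs u).symm
  unfold bump
  split_ifs with h
  · rw [max_eq_left (by nlinarith [abs_nonneg u])]
  · rw [max_eq_right (by nlinarith)]; norm_num

noncomputable def bumpDeriv (u : ℝ) : ℝ := 2 * |u| * max (1 - u ^ 2) 0 ^ 3 * (1 - 5 * u ^ 2)

theorem hasDerivAt_bump_mul_mul_abs (u : ℝ) :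
    HasDerivAt (fun u => bump u * (u * |u|)) (bumpDeriv u) u := by
  have habs (v : ℝ) : |max (1 - v ^ 2) 0| = max (1 - v ^ 2) 0 := abs_of_nonneg (le_max_right _ _)
  let g (v : ℝ) : ℝ := max (1 - v ^ 2) 0 ^ 2 * v
  have hrepr : (fun u => bump u * (u * |u|)) = fun u => g u * |g u| := by
    ext v
    simp only [g, bump_eq_max_pow, abs_mul, abs_pow, habs]
    ring
  have hg : HasDerivAt g
      (2 * max (1 - u ^ 2) 0 * (-2 * u) * u + max (1 - u ^ 2) 0 ^ 2) u := by
    have hin : HasDerivAt (fun u : ℝ => 1 - u ^ 2) (-2 * u) u := by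
      simpa using (hasDerivAt_pow 2 u).const_sub 1
    simpa using ((hasDerivAt_sq_max_zero _).comp u hin).fun_mul (hasDerivAt_id u)
  rw [hrepr]
  refine ((hasDerivAt_mul_abs (g u)).comp u hg).congr_deriv ?_
  simp only [g, bumpDeriv, abs_mul, abs_pow, habs]
  rcases le_total 0 (1 - u ^ 2) with h | h
  · simp only [max_eq_left h]; ring
  · simp only [max_eq_right h]; ring

theorem bumpDeriv_eq_zero {u : ℝ} (hu : 1 ≤ |u|) : bumpDeriv u = 0 := by
  have : 1 - u ^ 2 ≤ 0 := by nlinarith [sq_abs u]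
  simp [bumpDeriv, max_eq_right this]

theorem abs_bumpDeriv_le (u : ℝ) : |bumpDeriv u| ≤ 2 := by
  rcases le_or_gt 1 |u| with hu | hu
  · simp [bumpDeriv_eq_zero hu]
  have hu2 : u ^ 2 ≤ 1 := by nlinarith [sq_abs u, abs_nonneg u]
  have hp : max (1 - u ^ 2) 0 = 1 - u ^ 2 := max_eq_left (by linarith)
  have hquad : |(1 - u ^ 2) * (1 - 5 * u ^ 2)| ≤ 1 := by
    rw [abs_le]; constructor <;> nlinarith [sq_nonneg u, sq_nonneg (5 * u ^ 2 - 3)]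
  have hfac : bumpDeriv u = 2 * |u| * (1 - u ^ 2) ^ 2 * ((1 - u ^ 2) * (1 - 5 * u ^ 2)) := by
    rw [bumpDeriv, hp]; ring
  have hsq : (1 - u ^ 2) ^ 2 ≤ 1 := by nlinarith [sq_nonneg u]
  rw [hfac, abs_mul, abs_mul, abs_mul, abs_two, abs_abs, abs_sq]
  calc 2 * |u| * (1 - u ^ 2) ^ 2 * |(1 - u ^ 2) * (1 - 5 * u ^ 2)| ≤ 2 * 1 * 1 * 1 := by
        gcongr
  _ = 2 := by norm_num

theorem bumpDeriv_div_eq_zero {y ν : ℝ} (hν : 0 < ν) (hy : ν ≤ |y|) : bumpDeriv (y / ν) = 0 :=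
  bumpDeriv_eq_zero <| by rwa [abs_div, abs_of_pos hν, le_div_iff₀ hν, one_mul]

section Gtrans

variable {m : ℕ} {ζ α : Fin m → ℝ} {ν : ℝ}

theorem two_mul_lt_sub_of_lt (hζ : StrictMono ζ)
    (hgap : ∀ i : Fin m, ∀ h : i.val + 1 < m, 2 * ν < ζ ⟨i.val + 1, h⟩ - ζ i)
    {i j : Fin m} (hij : i < j) : 2 * ν < ζ j - ζ i := by
  have hsucc : i.val + 1 < m := lt_of_le_of_lt hij j.isLt
  have : ζ ⟨i.val + 1, hsucc⟩ ≤ ζ j := hζ.monotone (Fin.mk_le_of_le_val hij)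
  linarith [hgap i hsucc]

theorem eq_of_abs_sub_lt (hζ : StrictMono ζ)
    (hgap : ∀ i : Fin m, ∀ h : i.val + 1 < m, 2 * ν < ζ ⟨i.val + 1, h⟩ - ζ i)
    {x : ℝ} {i j : Fin m} (hi : |x - ζ i| < ν) (hj : |x - ζ j| < ν) : i = j := by
  rw [abs_lt] at hi hj
  rcases lt_trichotomy i j with h | h | h
  · linarith [two_mul_lt_sub_of_lt hζ hgap h]
  · exact h
  · linarith [two_mul_lt_sub_of_lt hζ hgap h]

theorem hasDerivAt_Gtrans (hν : 0 < ν) (x : ℝ) :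
    HasDerivAt (Gtrans ζ α ν) (1 + ∑ i, α i * ν * bumpDeriv ((x - ζ i) / ν)) x := by
  have hscale (y : ℝ) :
      bump (y / ν) * (y * |y|) = ν ^ 2 * (bump (y / ν) * (y / ν * |y / ν|)) := by
    rw [abs_div, abs_of_pos hν]; field_simp
  have hrepr : Gtrans ζ α ν = fun x =>
      x + ∑ i, α i * ν ^ 2 * (bump ((x - ζ i) / ν) * ((x - ζ i) / ν * |(x - ζ i) / ν|)) := by
    ext x
    simp only [Gtrans, mul_assoc, hscale]
  rw [hrepr]
  refine (hasDerivAt_id x).fun_add (HasDerivAt.fun_sum fun i _ => ?_)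
  have hin : HasDerivAt (fun x : ℝ => (x - ζ i) / ν) (1 / ν) x :=
    ((hasDerivAt_id x).sub_const (ζ i)).div_const ν
  refine (((hasDerivAt_bump_mul_mul_abs _).comp x hin).const_mul (α i * ν ^ 2)).congr_deriv ?_
  field_simp

theorem abs_sum_bumpDeriv_le (hζ : StrictMono ζ) (hν : 0 < ν) (hα : ∀ i, 8 * |α i| * ν < 1)
    (hgap : ∀ i : Fin m, ∀ h : i.val + 1 < m, 2 * ν < ζ ⟨i.val + 1, h⟩ - ζ i) (x : ℝ) :
    |∑ i, α i * ν * bumpDeriv ((x - ζ i) / ν)| ≤ 1 / 4 := by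
  have hterm (i : Fin m) : |α i * ν * bumpDeriv ((x - ζ i) / ν)| ≤ 1 / 4 := by
    rw [abs_mul, abs_mul, abs_of_pos hν]
    nlinarith [abs_bumpDeriv_le ((x - ζ i) / ν), hα i, abs_nonneg (α i),
      abs_nonneg (bumpDeriv ((x - ζ i) / ν))]
  have hfar (i : Fin m) (hi : ν ≤ |x - ζ i|) : α i * ν * bumpDeriv ((x - ζ i) / ν) = 0 := by
    rw [bumpDeriv_div_eq_zero hν hi, mul_zero]
  by_cases hnear : ∃ i, |x - ζ i| < ν
  · obtain ⟨i₀, hi₀⟩ := hnear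
    rw [Finset.sum_eq_single i₀ (fun j _ hj => hfar j (not_lt.1 fun h =>
      hj (eq_of_abs_sub_lt hζ hgap h hi₀))) (by simp)]
    exact hterm i₀
  · simp only [not_exists, not_lt] at hnear
    rw [Finset.sum_eq_zero fun i _ => hfar i (hnear i), abs_zero]
    norm_num

theorem deriv_Gtrans_eq_one (hν : 0 < ν) {x : ℝ} (hx : ν + ∑ i, |ζ i| < |x|) :
    deriv (Gtrans ζ α ν) x = 1 := by
  rw [(hasDerivAt_Gtrans hν x).deriv, add_eq_left]
  refine Finset.sum_eq_zero fun i _ => ?_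
  have hζi : |ζ i| ≤ ∑ j, |ζ j| :=
    Finset.single_le_sum (fun j _ => abs_nonneg (ζ j)) (Finset.mem_univ i)
  have hfar : ν ≤ |x - ζ i| := by linarith [abs_sub_abs_le_abs_sub x (ζ i)]
  rw [bumpDeriv_div_eq_zero hν hfar, mul_zero]

end Gtrans

/-- `inf_x G'(x) > 0`, and `G' = 1` outside a compact set. -/
theorem stmt_13 (m : ℕ) (ζ α : Fin m → ℝ) (hζ : StrictMono ζ) (ν : ℝ) (hν : 0 < ν)
    (hν1 : ∀ i, 8 * |α i| * ν < 1)
    (hν2 : ∀ i : Fin m, ∀ h : i.val + 1 < m, 2 * ν < ζ ⟨i.val + 1, h⟩ - ζ i) :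
    (∃ ε > (0 : ℝ), ∀ x, ε ≤ deriv (Gtrans ζ α ν) x) ∧
      ∃ c > (0 : ℝ), ∀ x : ℝ, c < |x| → deriv (Gtrans ζ α ν) x = 1 := by
  refine ⟨⟨3 / 4, by norm_num, fun x => ?_⟩, ⟨ν + ∑ i, |ζ i|, by positivity,
    fun x hx => deriv_Gtrans_eq_one hν hx⟩⟩
  rw [(hasDerivAt_Gtrans hν x).deriv]
  linarith [(abs_le.1 (abs_sum_bumpDeriv_le hζ hν hν1 hν2 x)).1]
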